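/- arXiv:2304.01803 — 2 statements merged into one kernel-verified Lean document; each statement's English description precedes it below -/
import Mathlib

section
/- Suppose u = 0 outside a bounded measurable set Ω ⊂ Y and K ⊂ Y \ Ω is a bounded measurable set with ν(K) > 0. Let R = diam K + sup{d(x,y): x ∈ K, y ∈ Ω}. Then for every z ∈ K, ∫_Y |u|^p dν ≤ R^{θp} · ν(B(z,R))/ν(K) · [u]_{θ,p}^p. -/
open MeasureTheory Metric Set ENNReal

open Classical in

/-- Pointwise Besov energy `∫_Y |u(x)-u(y)|^p / d(x,y)^{θp} · dν(y)/ν(B(x,d(x,y)))`. -/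
noncomputable def besovPointEnergy {Y : Type*} [MetricSpace Y] [MeasurableSpace Y]
    (ν : Measure Y) (θ p : ℝ) (u : Y → ℝ) (x : Y) : ℝ≥0∞ :=
  ∫⁻ y, (if x = y then 0 else
    ENNReal.ofReal (|u x - u y| ^ p) /
      (ENNReal.ofReal (dist x y ^ (θ * p)) * ν (ball x (dist x y)))) ∂ν

/-- The Besov seminorm to the power `p`:
`[u]_{θ,p}^p = ∫_Y ∫_Y |u(x)-u(y)|^p / d(x,y)^{θp} · dν(y) dν(x)/ν(B(x,d(x,y)))`. -/
noncomputable def besovEnergy {Y : Type*} [MetricSpace Y] [MeasurableSpace Y]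
    (ν : Measure Y) (θ p : ℝ) (u : Y → ℝ) : ℝ≥0∞ :=
  ∫⁻ x, besovPointEnergy ν θ p u x ∂ν

/-- `u` is admissible for the Besov norm-capacity of `E`:
`0 ≤ u ≤ 1` everywhere and `u = 1` in a neighbourhood of `E`. -/
def normAdmissible {Y : Type*} [MetricSpace Y] (E : Set Y) (u : Y → ℝ) : Prop :=
  (∀ z, 0 ≤ u z ∧ u z ≤ 1) ∧ ∃ G : Set Y, IsOpen G ∧ E ⊆ G ∧ ∀ z ∈ G, u z = 1

/-- The Besov norm-capacity `C_{θ,p}(E) = inf (‖u‖_{L^p}^p + [u]_{θ,p}^p)` over admissible `u`. -/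
noncomputable def besovNormCap {Y : Type*} [MetricSpace Y] [MeasurableSpace Y]
    (ν : Measure Y) (θ p : ℝ) (E : Set Y) : ℝ≥0∞ :=
  ⨅ (u : Y → ℝ) (_ : normAdmissible E u),
    (∫⁻ x, ENNReal.ofReal (|u x| ^ p) ∂ν) + besovEnergy ν θ p u

/-- `u` is admissible for the Besov condenser capacity of `(E, Ω)`:
`0 ≤ u ≤ 1` everywhere, `u = 1` in a neighbourhood of `E`, and `supp u ⋐ Ω`. -/
def condAdmissible {Y : Type*} [MetricSpace Y] (E Ω : Set Y) (u : Y → ℝ) : Prop :=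
  (∀ z, 0 ≤ u z ∧ u z ≤ 1) ∧ (∃ G : Set Y, IsOpen G ∧ E ⊆ G ∧ ∀ z ∈ G, u z = 1) ∧
    IsCompact (tsupport u) ∧ tsupport u ⊆ Ω

/-- The Besov condenser capacity `cap_{θ,p}(E,Ω) = inf [u]_{θ,p}^p` over admissible `u`. -/
noncomputable def besovCondCap {Y : Type*} [MetricSpace Y] [MeasurableSpace Y]
    (ν : Measure Y) (θ p : ℝ) (E Ω : Set Y) : ℝ≥0∞ :=
  ⨅ (u : Y → ℝ) (_ : condAdmissible E Ω u), besovEnergy ν θ p u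

/-- `ν` is doubling with constant `C`. -/
def IsDoublingWith {Y : Type*} [MetricSpace Y] [MeasurableSpace Y]
    (ν : Measure Y) (C : ℝ) : Prop :=
  ∀ (x : Y) (r : ℝ), 0 < r → ν (ball x (2 * r)) ≤ ENNReal.ofReal C * ν (ball x r)

/-- `ν` is positive and finite on balls. -/
def BallsPosFinite {Y : Type*} [MetricSpace Y] [MeasurableSpace Y] (ν : Measure Y) : Prop :=
  ∀ (x : Y) (r : ℝ), 0 < r → 0 < ν (ball x r) ∧ ν (ball x r) < ∞

/-- `X` is uniformly perfect at `x` with constant `κ`. -/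
def UnifPerfectAt {Y : Type*} [MetricSpace Y] (x : Y) (κ : ℝ) : Prop :=
  ∀ r : ℝ, 0 < r → ball x (κ * r) ≠ univ → (ball x (κ * r) \ ball x r).Nonempty

/-! Every point `y ∈ K` lies outside `Ω`, so `u y = 0` and `|u x|^p = |u x - u y|^p` for all `x`.
For `x ∈ Ω` the distance `d(y,x)` is at most `R` and `B(y, d(y,x)) ⊆ B(z,R)`, hence the
weight `d(y,x)^{θp} ν(B(y,d(y,x)))` of the Besov kernel is at most `R^{θp} ν(B(z,R))`. Integrating
in `x` bounds `‖u‖_p^p` by `R^{θp} ν(B(z,R))` times the pointwise energy at every `y ∈ K`;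
averaging over `y ∈ K` gives the claim. -/

section

variable {Y : Type*} [MetricSpace Y]

theorem dist_le_sSup_image_dist {s t : Set Y} (hs : Bornology.IsBounded s)
    (ht : Bornology.IsBounded t) {x y : Y} (hx : x ∈ s) (hy : y ∈ t) :
    dist x y ≤ sSup ((fun q : Y × Y => dist q.1 q.2) '' (s ×ˢ t)) := by
  obtain ⟨C, hC⟩ := isBounded_iff.mp (hs.union ht)
  refine le_csSup ⟨C, ?_⟩ ⟨(x, y), ⟨hx, hy⟩, rfl⟩
  rintro r ⟨⟨a, b⟩, ⟨ha, hb⟩, rfl⟩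
  exact hC (Or.inl ha) (Or.inr hb)

variable [MeasurableSpace Y]

theorem BallsPosFinite.measure_lt_top_of_isBounded {ν : Measure Y} (hν : BallsPosFinite ν)
    {s : Set Y} (hs : Bornology.IsBounded s) : ν s < ∞ := by
  rcases s.eq_empty_or_nonempty with rfl | ⟨c, hc⟩
  · simp
  obtain ⟨r, hr⟩ := hs.subset_ball c
  exact (measure_mono hr).trans_lt (hν c r (pos_of_mem_ball (hr hc))).2

noncomputable def besovScale (ν : Measure Y) (θ p : ℝ) (x : Y) (r : ℝ) : ℝ≥0∞ :=
  ENNReal.ofReal (r ^ (θ * p)) * ν (ball x r)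

open Classical in
noncomputable def besovKernel (ν : Measure Y) (θ p : ℝ) (u : Y → ℝ) (x y : Y) : ℝ≥0∞ :=
  if x = y then 0 else ENNReal.ofReal (|u x - u y| ^ p) / besovScale ν θ p x (dist x y)

theorem besovPointEnergy_eq_lintegral_besovKernel (ν : Measure Y) (θ p : ℝ) (u : Y → ℝ)
    (x : Y) : besovPointEnergy ν θ p u x = ∫⁻ y, besovKernel ν θ p u x y ∂ν :=
  rfl

variable {ν : Measure Y} {θ p : ℝ}

theorem besovScale_ne_top (hν : BallsPosFinite ν) (x : Y) (r : ℝ) : besovScale ν θ p x r ≠ ∞ :=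
  mul_ne_top ofReal_ne_top (hν.measure_lt_top_of_isBounded isBounded_ball).ne

theorem besovScale_ne_zero (hν : BallsPosFinite ν) (x : Y) {r : ℝ} (hr : 0 < r) :
    besovScale ν θ p x r ≠ 0 :=
  mul_ne_zero (ofReal_pos.2 (Real.rpow_pos_of_pos hr _)).ne' (hν x r hr).1.ne'

theorem besovScale_le_besovScale (hθp : 0 ≤ θ * p) {x y : Y} {r s : ℝ} (hr : 0 ≤ r)
    (h : r + dist x y ≤ s) : besovScale ν θ p x r ≤ besovScale ν θ p y s := by
  have hrs : r ≤ s := le_of_add_le_of_nonneg_left h dist_nonneg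
  unfold besovScale
  gcongr
  exact ball_subset_ball' h

variable {u : Y → ℝ} {y : Y} {B : ℝ≥0∞}

theorem ofReal_abs_rpow_le_mul_besovKernel (hν : BallsPosFinite ν) (hy : u y = 0) {x : Y}
    (hyx : y ≠ x) (hB : besovScale ν θ p y (dist y x) ≤ B) :
    ENNReal.ofReal (|u x| ^ p) ≤ B * besovKernel ν θ p u y x := by
  have hb0 : besovScale ν θ p y (dist y x) ≠ 0 := besovScale_ne_zero hν y (dist_pos.2 hyx)
  have hbtop : besovScale ν θ p y (dist y x) ≠ ∞ := besovScale_ne_top hν y (dist y x)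
  rw [besovKernel, if_neg hyx, hy, zero_sub, abs_neg]
  calc ENNReal.ofReal (|u x| ^ p)
      = besovScale ν θ p y (dist y x) * (ENNReal.ofReal (|u x| ^ p) /
          besovScale ν θ p y (dist y x)) := (ENNReal.mul_div_cancel hb0 hbtop).symm
    _ ≤ B * (ENNReal.ofReal (|u x| ^ p) / besovScale ν θ p y (dist y x)) := by gcongr

theorem lintegral_ofReal_abs_rpow_le_mul_besovPointEnergy (hν : BallsPosFinite ν) (hp : p ≠ 0)
    (hy : u y = 0) (hB : B ≠ ∞)
    (h : ∀ x, u x ≠ 0 → y ≠ x ∧ besovScale ν θ p y (dist y x) ≤ B) :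
    ∫⁻ x, ENNReal.ofReal (|u x| ^ p) ∂ν ≤ B * besovPointEnergy ν θ p u y := by
  rw [besovPointEnergy_eq_lintegral_besovKernel, ← lintegral_const_mul' _ _ hB]
  refine lintegral_mono fun x => ?_
  by_cases hx : u x = 0
  · simp [hx, Real.zero_rpow hp]
  · exact ofReal_abs_rpow_le_mul_besovKernel hν hy (h x hx).1 (h x hx).2

end

theorem stmt9_general {Y : Type*} [MetricSpace Y] [MeasurableSpace Y]
    (ν : Measure Y) (θ p : ℝ) (hθ : 0 < θ) (hp : 1 ≤ p) (hballs : BallsPosFinite ν)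
    (Ω K : Set Y) (hΩb : Bornology.IsBounded Ω)
    (hKb : Bornology.IsBounded K) (hKm : MeasurableSet K)
    (hKΩ : K ⊆ Ωᶜ) (hνK : 0 < ν K)
    (u : Y → ℝ) (hu : ∀ z ∉ Ω, u z = 0) (R : ℝ)
    (hR : R = Metric.diam K + sSup ((fun q : Y × Y => dist q.1 q.2) '' (K ×ˢ Ω))) :
    ∀ z ∈ K,
      (∫⁻ x, ENNReal.ofReal (|u x| ^ p) ∂ν) ≤
        ENNReal.ofReal (R ^ (θ * p)) * (ν (ball z R) / ν K) * besovEnergy ν θ p u := by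
  intro z hz
  have hp0 : 0 < p := zero_lt_one.trans_le hp
  set A := ∫⁻ x, ENNReal.ofReal (|u x| ^ p) ∂ν
  set B := besovScale ν θ p z R with hB
  have hBtop : B ≠ ∞ := besovScale_ne_top hballs z R
  have hpoint : ∀ y ∈ K, A ≤ B * besovPointEnergy ν θ p u y := by
    intro y hy
    refine lintegral_ofReal_abs_rpow_le_mul_besovPointEnergy hballs hp0.ne' (hu y (hKΩ hy)) hBtop
      fun x hx => ?_
    have hxΩ : x ∈ Ω := by_contra fun h => hx (hu x h)
    have hdist : dist y x + dist y z ≤ R := by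
      rw [hR, add_comm]
      exact add_le_add (dist_le_diam_of_mem hKb hy hz) (dist_le_sSup_image_dist hKb hΩb hy hxΩ)
    exact ⟨fun h => hKΩ hy (h ▸ hxΩ),
      besovScale_le_besovScale (mul_pos hθ hp0).le dist_nonneg hdist⟩
  have hmul : A * ν K ≤ B * besovEnergy ν θ p u :=
    calc A * ν K = ∫⁻ _ in K, A ∂ν := (setLIntegral_const K A).symm
      _ ≤ ∫⁻ y in K, B * besovPointEnergy ν θ p u y ∂ν := setLIntegral_mono' hKm hpoint
      _ = B * ∫⁻ y in K, besovPointEnergy ν θ p u y ∂ν := lintegral_const_mul' _ _ hBtop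
      _ ≤ B * besovEnergy ν θ p u := by gcongr; exact setLIntegral_le_lintegral K _
  calc A ≤ B * besovEnergy ν θ p u / ν K :=
        (ENNReal.le_div_iff_mul_le (Or.inl hνK.ne')
          (Or.inl (hballs.measure_lt_top_of_isBounded hKb).ne)).2 hmul
    _ = ENNReal.ofReal (R ^ (θ * p)) * (ν (ball z R) / ν K) * besovEnergy ν θ p u := by
      rw [hB, besovScale, div_eq_mul_inv, div_eq_mul_inv]; ring

theorem stmt9 {Y : Type*} [MetricSpace Y] [MeasurableSpace Y] [BorelSpace Y] [CompleteSpace Y]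
    (ν : Measure Y) (θ p : ℝ) (hθ : 0 < θ) (hp : 1 ≤ p) (hballs : BallsPosFinite ν)
    (Ω K : Set Y) (hΩb : Bornology.IsBounded Ω) (hΩm : MeasurableSet Ω)
    (hKb : Bornology.IsBounded K) (hKm : MeasurableSet K)
    (hKΩ : K ⊆ Ωᶜ) (hνK : 0 < ν K)
    (u : Y → ℝ) (hu : ∀ z ∉ Ω, u z = 0) (R : ℝ)
    (hR : R = Metric.diam K + sSup ((fun q : Y × Y => dist q.1 q.2) '' (K ×ˢ Ω))) :
    ∀ z ∈ K,
      (∫⁻ x, ENNReal.ofReal (|u x| ^ p) ∂ν) ≤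
        ENNReal.ofReal (R ^ (θ * p)) * (ν (ball z R) / ν K) * besovEnergy ν θ p u :=
  stmt9_general ν θ p hθ hp hballs Ω K hΩb hKb hKm hKΩ hνK u hu R hR
end

section
/- Let Y be complete with doubling measure ν and uniformly perfect at x_0 with constant κ, 0 < θ < 1, 1 ≤ p < ∞, and fix 0 < Θ < 1. If 0 < ΘR ≤ 2r ≤ R and B(x_0,2R) ≠ Y, then cap_{θ,p}(B(x_0,r), B(x_0,R)) ≃ ν(B(x_0,r))/r^{θp} ≃ ν(B(x_0,R))/R^{θp}, with comparison constants depending only on θ, p, κ, Θ and the doubling constant. -/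
open MeasureTheory Metric Set ENNReal

universe u

/-!
Upper bound: test the capacity with a cutoff that is `1` on `B(x₀, R/2)`, vanishes off
`B(x₀, 3R/4)` and is `4/R`-Lipschitz. Around each point, split the Besov integral into dyadic
shells; doubling turns each shell into a term of a geometric series, which converges on the
inner side because `θ < 1` and on the outer side because `θ > 0`. This bounds the energy by
`ν(B(x₀, R)) / R^{θp}`. The support of the cutoff is compact because a complete doubling space
is proper.

Lower bound: uniform perfectness gives a point `z` with `2R ≤ d(z, x₀) < 2κR`. An admissible
function is `1` on `B(x₀, r)` and `0` on `B(z, R)`, and pairs of points from these two balls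
already contribute `≳ ν(B(x₀, r)) ν(B(z, R)) / (R^{θp} ν(B(x₀, R)))`. Since `r ≃ R`,
doubling makes all three balls comparable in measure.
-/

namespace IsDoublingWith

variable {Y : Type*} [MetricSpace Y] [MeasurableSpace Y] {ν : Measure Y} {Cν : ℝ}

theorem measure_ball_two_pow_mul_le (hD : IsDoublingWith ν Cν) (x : Y) {s : ℝ} (hs : 0 < s)
    (n : ℕ) : ν (ball x (2 ^ n * s)) ≤ ENNReal.ofReal Cν ^ n * ν (ball x s) := by
  induction n with
  | zero => simp
  | succ n ih =>
    calc ν (ball x (2 ^ (n + 1) * s)) = ν (ball x (2 * (2 ^ n * s))) := by ring_nf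
      _ ≤ ENNReal.ofReal Cν * ν (ball x (2 ^ n * s)) := hD x _ (by positivity)
      _ ≤ ENNReal.ofReal Cν * (ENNReal.ofReal Cν ^ n * ν (ball x s)) := by gcongr
      _ = ENNReal.ofReal Cν ^ (n + 1) * ν (ball x s) := by ring

theorem ofReal_ne_zero (hD : IsDoublingWith ν Cν) (hB : BallsPosFinite ν) (x : Y) :
    ENNReal.ofReal Cν ≠ 0 := fun h => by
  have := hD x 1 one_pos
  rw [h, zero_mul, nonpos_iff_eq_zero] at this
  exact (hB x _ two_pos).1.ne' (by simpa using this)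

theorem measure_le_of_subset_ball (hD : IsDoublingWith ν Cν) {x : Y} {s : ℝ} (hs : 0 < s)
    {n : ℕ} {S : Set Y} (hS : S ⊆ ball x (2 ^ n * s)) :
    ν S ≤ ENNReal.ofReal Cν ^ n * ν (ball x s) :=
  (measure_mono hS).trans (hD.measure_ball_two_pow_mul_le x hs n)

theorem one_div_rpow_mul_measure_ball_le (hD : IsDoublingWith ν Cν)
    (hB : BallsPosFinite ν) {s : ℝ} (hs : 0 ≤ s) {x₀ x : Y} (ht : 0 < dist x₀ x) {d : ℝ}
    (hd : dist x₀ x / 2 ≤ d) :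
    1 / (ENNReal.ofReal (d ^ s) * ν (ball x d)) ≤ ENNReal.ofReal Cν ^ 2 *
      ENNReal.ofReal (2 ^ s) / (ENNReal.ofReal (dist x₀ x ^ s) * ν (ball x₀ (dist x₀ x))) := by
  set t := dist x₀ x
  set K := ENNReal.ofReal Cν ^ 2 * ENNReal.ofReal (2 ^ s)
  have hK0 : K ≠ 0 := mul_ne_zero (pow_ne_zero _ (hD.ofReal_ne_zero hB x))
    (ENNReal.ofReal_pos.mpr (by positivity)).ne'
  have hball : ν (ball x₀ t) ≤ ENNReal.ofReal Cν ^ 2 * ν (ball x (t / 2)) :=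
    hD.measure_le_of_subset_ball (by positivity) fun w hw => by
      rw [mem_ball] at hw ⊢
      linarith [dist_triangle w x₀ x]
  calc 1 / (ENNReal.ofReal (d ^ s) * ν (ball x d))
      ≤ 1 / (ENNReal.ofReal ((t / 2) ^ s) * ν (ball x (t / 2))) := by
        gcongr
    _ = K * 1 / (K * (ENNReal.ofReal ((t / 2) ^ s) * ν (ball x (t / 2)))) :=
        (ENNReal.mul_div_mul_left _ _ hK0 (by finiteness)).symm
    _ ≤ K / (ENNReal.ofReal (t ^ s) * ν (ball x₀ t)) := by
        rw [mul_one]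
        refine ENNReal.div_le_div_left ?_ K
        calc ENNReal.ofReal (t ^ s) * ν (ball x₀ t)
            = ENNReal.ofReal (2 ^ s) * ENNReal.ofReal ((t / 2) ^ s) * ν (ball x₀ t) := by
              rw [← ENNReal.ofReal_mul (by positivity), ← Real.mul_rpow (by norm_num)
                (by positivity), mul_div_cancel₀ _ two_ne_zero]
          _ ≤ ENNReal.ofReal (2 ^ s) * ENNReal.ofReal ((t / 2) ^ s) *
                (ENNReal.ofReal Cν ^ 2 * ν (ball x (t / 2))) := by gcongr
          _ = K * (ENNReal.ofReal ((t / 2) ^ s) * ν (ball x (t / 2))) := by ring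

/-- An infinite `ε`-separated sequence in a ball would give infinitely many disjoint balls of
radius `ε / 2`, each carrying a fixed fraction of the measure of one larger ball. -/
theorem isCompact_closedBall [OpensMeasurableSpace Y] [CompleteSpace Y] (hD : IsDoublingWith ν Cν)
    (hB : BallsPosFinite ν) (x : Y) (s : ℝ) : IsCompact (closedBall x s) := by
  refine TotallyBounded.isCompact_of_isClosed ?_ isClosed_closedBall
  by_contra hTB
  obtain ⟨ε, hε, hnet⟩ : ∃ ε > 0, ∀ t : Set Y, t.Finite →
      ∃ z, z ∈ closedBall x s ∧ z ∉ ⋃ y ∈ t, ball y ε := by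
    simpa [Metric.totallyBounded_iff, not_subset] using hTB
  obtain ⟨z, hz⟩ := seq_of_forall_finite_exists hnet
  have hzs : ∀ n, z n ∈ closedBall x s := fun n => (hz n).1
  have hsep : ∀ m n, m < n → ε ≤ dist (z n) (z m) := fun m n hmn =>
    not_lt.mp fun h => (hz n).2 (mem_biUnion (mem_image_of_mem z hmn) (mem_ball.mpr h))
  have hs : 0 ≤ s := dist_nonneg.trans (hzs 0)
  have hdisj : Pairwise (Function.onFun Disjoint fun n => ball (z n) (ε / 2)) :=
    fun m n hmn => ball_disjoint_ball <| by
      rcases hmn.lt_or_gt with h | h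
      · linarith [hsep m n h, dist_comm (z m) (z n)]
      · linarith [hsep n m h]
  have hunion : (⋃ n, ball (z n) (ε / 2)) ⊆ ball x (s + ε) := iUnion_subset fun n y hy => by
    rw [mem_ball] at hy ⊢
    linarith [dist_triangle y (z n) x, mem_closedBall.mp (hzs n)]
  obtain ⟨N, hN⟩ := pow_unbounded_of_one_lt ((2 * s + ε) / (ε / 2)) one_lt_two
  rw [div_lt_iff₀ (by positivity)] at hN
  have hlarge : ∀ n, ν (ball x (s + ε)) ≤ ENNReal.ofReal Cν ^ N * ν (ball (z n) (ε / 2)) :=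
    fun n => hD.measure_le_of_subset_ball (by positivity) fun y hy => by
      rw [mem_ball] at hy ⊢
      linarith [dist_triangle y x (z n), mem_closedBall'.mp (hzs n)]
  have hpos : 0 < ν (ball x (s + ε)) / ENNReal.ofReal Cν ^ N :=
    ENNReal.div_pos (hB x _ (by positivity)).1.ne' (ENNReal.pow_ne_top ENNReal.ofReal_ne_top)
  have hfin := Measure.finite_const_le_meas_of_disjoint_iUnion ν hpos
    (fun _ => measurableSet_ball) hdisj
    (ne_top_of_le_ne_top (hB x _ (by positivity)).2.ne (measure_mono hunion))
  refine Set.infinite_univ (hfin.subset fun n _ => ?_)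
  exact ENNReal.div_le_of_le_mul' (hlarge n)

end IsDoublingWith

theorem ENNReal.div_mul_eq_div_div {a b c : ℝ≥0∞} (hb0 : b ≠ 0) (hb : b ≠ ∞) :
    a / (b * c) = a / b / c := by
  rw [div_eq_mul_inv, div_eq_mul_inv, div_eq_mul_inv, ENNReal.mul_inv (Or.inl hb0) (Or.inl hb),
    mul_assoc]

theorem ENNReal.tsum_ofReal_mul_geometric {c q : ℝ} (hc : 0 ≤ c) (hq0 : 0 ≤ q) (hq1 : q < 1) :
    ∑' k : ℕ, ENNReal.ofReal (c * q ^ k) = ENNReal.ofReal (c * (1 - q)⁻¹) := by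
  rw [← ENNReal.ofReal_tsum_of_nonneg (fun k => by positivity)
    ((summable_geometric_of_lt_one hq0 hq1).mul_left c), tsum_mul_left,
    tsum_geometric_of_lt_one hq0 hq1]

theorem Real.inv_one_sub_two_rpow_nonneg {t : ℝ} (ht : t ≤ 0) : 0 ≤ (1 - (2:ℝ) ^ t)⁻¹ :=
  inv_nonneg.mpr (sub_nonneg.mpr (Real.rpow_le_one_of_one_le_of_nonpos one_le_two ht))

theorem Real.inv_two_pow_rpow_div_rpow {ρ : ℝ} (hρ : 0 < ρ) (k : ℕ) (s p : ℝ) :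
    ((2:ℝ) ^ k)⁻¹ ^ p / (ρ / 2 ^ (k + 1)) ^ s = 2 ^ s / ρ ^ s * ((2:ℝ) ^ (s - p)) ^ k := by
  rw [Real.div_rpow hρ.le (by positivity), Real.inv_rpow (by positivity),
    ← Real.rpow_natCast, ← Real.rpow_natCast, ← Real.rpow_mul (by norm_num),
    ← Real.rpow_mul (by norm_num), ← Real.rpow_natCast, ← Real.rpow_mul (by norm_num)]
  push_cast
  rw [show ((k:ℝ) + 1) * s = k * s + s by ring, show (s - p) * k = k * s - k * p by ring,
    Real.rpow_add two_pos, Real.rpow_sub two_pos]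
  field_simp

theorem Real.inv_two_pow_mul_rpow {ρ : ℝ} (hρ : 0 < ρ) (k : ℕ) (s : ℝ) :
    ((2 ^ k * ρ) ^ s)⁻¹ = (ρ ^ s)⁻¹ * ((2:ℝ) ^ (-s)) ^ k := by
  rw [Real.mul_rpow (by positivity) hρ.le, ← Real.rpow_natCast, ← Real.rpow_natCast,
    ← Real.rpow_mul (by norm_num), ← Real.rpow_mul (by norm_num), neg_mul,
    Real.rpow_neg (by norm_num), mul_comm s, mul_inv, mul_comm]

section DyadicShells

variable {Y : Type*} [MetricSpace Y]

def dyadicShell (x : Y) (a : ℝ) : Set Y := {y | a < dist x y ∧ dist x y ≤ 2 * a}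

theorem measurableSet_dyadicShell [MeasurableSpace Y] [OpensMeasurableSpace Y] (x : Y) (a : ℝ) :
    MeasurableSet (dyadicShell x a) :=
  (continuous_const.dist continuous_id).measurable measurableSet_Ioc

theorem exists_mem_dyadicShell_of_le {x y : Y} {ρ : ℝ} (hxy : 0 < dist x y) (h : dist x y ≤ ρ) :
    ∃ k : ℕ, y ∈ dyadicShell x (ρ / 2 ^ (k + 1)) := by
  obtain ⟨k, hk1, hk2⟩ := exists_nat_pow_near ((one_le_div hxy).mpr h) one_lt_two
  refine ⟨k, ?_, ?_⟩
  · rw [div_lt_iff₀ (by positivity)]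
    rwa [div_lt_iff₀ hxy, mul_comm] at hk2
  · rw [le_div_iff₀ hxy] at hk1
    calc dist x y = 2 ^ k * dist x y / 2 ^ k := by field_simp
      _ ≤ ρ / 2 ^ k := by gcongr
      _ = 2 * (ρ / 2 ^ (k + 1)) := by rw [pow_succ]; field_simp

theorem exists_mem_dyadicShell_of_lt {x y : Y} {ρ : ℝ} (hρ : 0 < ρ) (h : ρ < dist x y) :
    ∃ k : ℕ, y ∈ dyadicShell x (2 ^ k * ρ) := by
  obtain ⟨n, hn1, hn2⟩ := exists_mem_Ioc_zpow (div_pos (hρ.trans h) hρ) one_lt_two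
  have hn : 0 ≤ n := by
    by_contra! hneg
    have : (2:ℝ) ^ (n + 1) ≤ 1 := zpow_le_one_of_nonpos₀ one_le_two (by omega)
    linarith [(one_lt_div hρ).mpr h]
  lift n to ℕ using hn
  refine ⟨n, ?_, ?_⟩
  · rwa [zpow_natCast, lt_div_iff₀ hρ] at hn1
  · rw [zpow_add_one₀ two_ne_zero, zpow_natCast, div_le_iff₀ hρ] at hn2
    linarith

variable [MeasurableSpace Y] [OpensMeasurableSpace Y] {ν : Measure Y} {Cν : ℝ}

theorem IsDoublingWith.setLIntegral_dyadicShell_le (hD : IsDoublingWith ν Cν)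
    (hB : BallsPosFinite ν) {x : Y} {a : ℝ} (ha : 0 < a) {g : Y → ℝ≥0∞} {b c : ℝ≥0∞}
    (hb0 : b ≠ 0) (hb : b ≠ ∞) (hg : ∀ y ∈ dyadicShell x a, g y ≤ c / (b * ν (ball x a))) :
    ∫⁻ y in dyadicShell x a, g y ∂ν ≤ ENNReal.ofReal Cν ^ 2 * (c / b) := by
  have hm := hB x a ha
  have hshell : ν (dyadicShell x a) ≤ ENNReal.ofReal Cν ^ 2 * ν (ball x a) :=
    hD.measure_le_of_subset_ball ha fun y hy => by
      rw [mem_ball, dist_comm]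
      linarith [hy.2]
  calc ∫⁻ y in dyadicShell x a, g y ∂ν
      ≤ ∫⁻ _ in dyadicShell x a, c / b / ν (ball x a) ∂ν :=
        setLIntegral_mono' (measurableSet_dyadicShell x a) fun y hy =>
          (hg y hy).trans_eq (ENNReal.div_mul_eq_div_div hb0 hb)
    _ = c / b / ν (ball x a) * ν (dyadicShell x a) := setLIntegral_const _ _
    _ ≤ c / b / ν (ball x a) * (ENNReal.ofReal Cν ^ 2 * ν (ball x a)) := by gcongr
    _ = ENNReal.ofReal Cν ^ 2 * (c / b) := by
      rw [mul_left_comm, ENNReal.div_mul_cancel hm.1.ne' hm.2.ne]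

end DyadicShells

section TailIntegrals

variable {Y : Type*} [MetricSpace Y] [MeasurableSpace Y] [OpensMeasurableSpace Y]
  {ν : Measure Y} {Cν : ℝ}

theorem IsDoublingWith.setLIntegral_near_le (hD : IsDoublingWith ν Cν) (hB : BallsPosFinite ν)
    {s p : ℝ} (hs : 0 ≤ s) (hsp : s < p) (x : Y) {ρ : ℝ} (hρ : 0 < ρ) {g : Y → ℝ≥0∞}
    (hg : ∀ y, 0 < dist x y → dist x y ≤ ρ → g y ≤ ENNReal.ofReal ((dist x y / ρ) ^ p) /
      (ENNReal.ofReal (dist x y ^ s) * ν (ball x (dist x y)))) :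
    ∫⁻ y in {y | 0 < dist x y ∧ dist x y ≤ ρ}, g y ∂ν ≤
      ENNReal.ofReal Cν ^ 2 * ENNReal.ofReal (2 ^ s / ρ ^ s * (1 - 2 ^ (s - p))⁻¹) := by
  have hq : (2:ℝ) ^ (s - p) < 1 := Real.rpow_lt_one_of_one_lt_of_neg one_lt_two (by linarith)
  have hshell : ∀ k : ℕ, ∫⁻ y in dyadicShell x (ρ / 2 ^ (k + 1)), g y ∂ν ≤
      ENNReal.ofReal Cν ^ 2 * ENNReal.ofReal (2 ^ s / ρ ^ s * ((2:ℝ) ^ (s - p)) ^ k) := by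
    intro k
    have ha : 0 < ρ / 2 ^ (k + 1) := by positivity
    have h2a : 2 * (ρ / 2 ^ (k + 1)) / ρ = ((2:ℝ) ^ k)⁻¹ := by rw [pow_succ]; field_simp
    calc ∫⁻ y in dyadicShell x (ρ / 2 ^ (k + 1)), g y ∂ν
        ≤ ENNReal.ofReal Cν ^ 2 * (ENNReal.ofReal (((2:ℝ) ^ k)⁻¹ ^ p) /
            ENNReal.ofReal ((ρ / 2 ^ (k + 1)) ^ s)) := by
          refine hD.setLIntegral_dyadicShell_le hB ha
            (ENNReal.ofReal_pos.mpr (by positivity)).ne' ENNReal.ofReal_ne_top fun y hy => ?_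
          have hyρ : dist x y / ρ ≤ ((2:ℝ) ^ k)⁻¹ := h2a ▸ by gcongr; exact hy.2
          refine (hg y (ha.trans hy.1) ((div_le_one hρ).mp (hyρ.trans
            (inv_le_one_of_one_le₀ (one_le_pow₀ one_le_two))))).trans
            (ENNReal.div_le_div (ENNReal.ofReal_le_ofReal
              (Real.rpow_le_rpow (by positivity) hyρ (by linarith))) ?_)
          gcongr <;> exact hy.1.le
      _ = ENNReal.ofReal Cν ^ 2 * ENNReal.ofReal (2 ^ s / ρ ^ s * ((2:ℝ) ^ (s - p)) ^ k) := by
        rw [← ENNReal.ofReal_div_of_pos (by positivity), Real.inv_two_pow_rpow_div_rpow hρ]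
  calc ∫⁻ y in {y | 0 < dist x y ∧ dist x y ≤ ρ}, g y ∂ν
      ≤ ∑' k : ℕ, ∫⁻ y in dyadicShell x (ρ / 2 ^ (k + 1)), g y ∂ν :=
        (lintegral_mono_set fun y hy => mem_iUnion.mpr
          (exists_mem_dyadicShell_of_le hy.1 hy.2)).trans (lintegral_iUnion_le _ _)
    _ ≤ ∑' k : ℕ, ENNReal.ofReal Cν ^ 2 *
          ENNReal.ofReal (2 ^ s / ρ ^ s * ((2:ℝ) ^ (s - p)) ^ k) := ENNReal.tsum_le_tsum hshell
    _ = ENNReal.ofReal Cν ^ 2 * ENNReal.ofReal (2 ^ s / ρ ^ s * (1 - 2 ^ (s - p))⁻¹) := by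
      rw [ENNReal.tsum_mul_left,
        ENNReal.tsum_ofReal_mul_geometric (by positivity) (by positivity) hq]

theorem IsDoublingWith.setLIntegral_far_le (hD : IsDoublingWith ν Cν) (hB : BallsPosFinite ν)
    {s : ℝ} (hs : 0 < s) (x : Y) {ρ : ℝ} (hρ : 0 < ρ) {g : Y → ℝ≥0∞} {c : ℝ≥0∞}
    (hg : ∀ y, ρ < dist x y →
      g y ≤ c / (ENNReal.ofReal (dist x y ^ s) * ν (ball x (dist x y)))) :
    ∫⁻ y in {y | ρ < dist x y}, g y ∂ν ≤
      ENNReal.ofReal Cν ^ 2 * c * ENNReal.ofReal ((ρ ^ s)⁻¹ * (1 - 2 ^ (-s))⁻¹) := by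
  have hq : (2:ℝ) ^ (-s) < 1 := Real.rpow_lt_one_of_one_lt_of_neg one_lt_two (by linarith)
  have hshell : ∀ k : ℕ, ∫⁻ y in dyadicShell x (2 ^ k * ρ), g y ∂ν ≤
      ENNReal.ofReal Cν ^ 2 * c * ENNReal.ofReal ((ρ ^ s)⁻¹ * ((2:ℝ) ^ (-s)) ^ k) := by
    intro k
    set a := 2 ^ k * ρ
    have ha : 0 < a := by positivity
    calc ∫⁻ y in dyadicShell x a, g y ∂ν
        ≤ ENNReal.ofReal Cν ^ 2 * (c / ENNReal.ofReal (a ^ s)) := by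
          refine hD.setLIntegral_dyadicShell_le hB ha
            (ENNReal.ofReal_pos.mpr (by positivity)).ne' ENNReal.ofReal_ne_top fun y hy => ?_
          refine (hg y (lt_of_le_of_lt (le_mul_of_one_le_left hρ.le (one_le_pow₀ one_le_two))
            hy.1)).trans (ENNReal.div_le_div le_rfl ?_)
          gcongr
          · exact hy.1.le
          · exact hy.1.le
      _ = ENNReal.ofReal Cν ^ 2 * c * ENNReal.ofReal ((ρ ^ s)⁻¹ * ((2:ℝ) ^ (-s)) ^ k) := by
        rw [div_eq_mul_inv, ← ENNReal.ofReal_inv_of_pos (by positivity), mul_assoc,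
          Real.inv_two_pow_mul_rpow hρ]
  calc ∫⁻ y in {y | ρ < dist x y}, g y ∂ν
      ≤ ∑' k : ℕ, ∫⁻ y in dyadicShell x (2 ^ k * ρ), g y ∂ν :=
        (lintegral_mono_set fun y hy => mem_iUnion.mpr
          (exists_mem_dyadicShell_of_lt hρ hy)).trans (lintegral_iUnion_le _ _)
    _ ≤ ∑' k : ℕ, ENNReal.ofReal Cν ^ 2 * c *
          ENNReal.ofReal ((ρ ^ s)⁻¹ * ((2:ℝ) ^ (-s)) ^ k) := ENNReal.tsum_le_tsum hshell
    _ = ENNReal.ofReal Cν ^ 2 * c * ENNReal.ofReal ((ρ ^ s)⁻¹ * (1 - 2 ^ (-s))⁻¹) := by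
      rw [ENNReal.tsum_mul_left,
        ENNReal.tsum_ofReal_mul_geometric (by positivity) (by positivity) hq]

end TailIntegrals

/-- The sums of the geometric series from the dyadic shells inside and outside a radius. -/
noncomputable def besovTailConst (s p : ℝ) : ℝ := 2 ^ s * (1 - 2 ^ (s - p))⁻¹ + (1 - 2 ^ (-s))⁻¹

theorem besovTailConst_nonneg {s p : ℝ} (hs : 0 ≤ s) (hsp : s < p) : 0 ≤ besovTailConst s p :=
  add_nonneg (mul_nonneg (by positivity) (Real.inv_one_sub_two_rpow_nonneg (by linarith)))
    (Real.inv_one_sub_two_rpow_nonneg (by linarith))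

section PointEnergy

variable {Y : Type*} [MetricSpace Y] [MeasurableSpace Y] [OpensMeasurableSpace Y]
  {ν : Measure Y} {Cν : ℝ}

theorem IsDoublingWith.besovPointEnergy_le (hD : IsDoublingWith ν Cν) (hB : BallsPosFinite ν)
    {θ p : ℝ} (hθ0 : 0 < θ) (hθ1 : θ < 1) (hp : 0 < p) {u : Y → ℝ} {x : Y} {ρ : ℝ}
    (hρ : 0 < ρ) (hu1 : ∀ y, |u x - u y| ≤ 1) (huL : ∀ y, |u x - u y| ≤ dist x y / ρ) :
    besovPointEnergy ν θ p u x ≤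
      ENNReal.ofReal Cν ^ 2 * ENNReal.ofReal (besovTailConst (θ * p) p / ρ ^ (θ * p)) := by
  classical
  have hs : 0 < θ * p := mul_pos hθ0 hp
  set g : Y → ℝ≥0∞ := fun y => if x = y then 0 else ENNReal.ofReal (|u x - u y| ^ p) /
    (ENNReal.ofReal (dist x y ^ (θ * p)) * ν (ball x (dist x y)))
  have hsupp : Function.support g ⊆
      {y | 0 < dist x y ∧ dist x y ≤ ρ} ∪ {y | ρ < dist x y} := fun y hy => by
    have hxy : 0 < dist x y := dist_pos.mpr fun h => hy (if_pos h)
    rcases le_or_gt (dist x y) ρ with h | h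
    exacts [Or.inl ⟨hxy, h⟩, Or.inr h]
  have hg : ∀ y, 0 < dist x y → g y = ENNReal.ofReal (|u x - u y| ^ p) /
      (ENNReal.ofReal (dist x y ^ (θ * p)) * ν (ball x (dist x y))) := fun y hxy =>
    if_neg (dist_pos.mp hxy)
  have hnear := hD.setLIntegral_near_le hB hs.le (mul_lt_of_lt_one_left hp hθ1) x hρ
    (g := g) fun y hxy _ => (hg y hxy).trans_le <| ENNReal.div_le_div_right
      (ENNReal.ofReal_le_ofReal (Real.rpow_le_rpow (abs_nonneg _) (huL y) hp.le)) _
  have hfar := hD.setLIntegral_far_le hB hs x hρ (g := g) (c := 1) fun y hxy =>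
    (hg y (hρ.trans hxy)).trans_le <| ENNReal.div_le_div_right
      (ENNReal.ofReal_le_one.mpr (Real.rpow_le_one (abs_nonneg _) (hu1 y) hp.le)) _
  calc besovPointEnergy ν θ p u x = ∫⁻ y in {y | 0 < dist x y ∧ dist x y ≤ ρ} ∪
        {y | ρ < dist x y}, g y ∂ν := (setLIntegral_eq_of_support_subset hsupp).symm
    _ ≤ (∫⁻ y in {y | 0 < dist x y ∧ dist x y ≤ ρ}, g y ∂ν) +
        ∫⁻ y in {y | ρ < dist x y}, g y ∂ν := lintegral_union_le _ _ _
    _ ≤ ENNReal.ofReal Cν ^ 2 * ENNReal.ofReal (2 ^ (θ * p) / ρ ^ (θ * p) *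
          (1 - 2 ^ (θ * p - p))⁻¹) +
        ENNReal.ofReal Cν ^ 2 * 1 * ENNReal.ofReal ((ρ ^ (θ * p))⁻¹ * (1 - 2 ^ (-(θ * p)))⁻¹) :=
      add_le_add hnear hfar
    _ = ENNReal.ofReal Cν ^ 2 * ENNReal.ofReal (besovTailConst (θ * p) p / ρ ^ (θ * p)) := by
      rw [mul_one, ← mul_add, ← ENNReal.ofReal_add
        (mul_nonneg (by positivity) (Real.inv_one_sub_two_rpow_nonneg (by nlinarith)))
        (mul_nonneg (by positivity) (Real.inv_one_sub_two_rpow_nonneg (by linarith))),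
        besovTailConst]
      congr 2
      ring

theorem IsDoublingWith.besovPointEnergy_le_of_far (hD : IsDoublingWith ν Cν)
    (hB : BallsPosFinite ν) {θ p : ℝ} (hθ0 : 0 < θ) (hp : 0 < p) {u : Y → ℝ}
    (hu : ∀ y, |u y| ≤ 1) {x₀ x : Y} {ρ : ℝ} (hρ : 0 < ρ) (hu0 : ∀ y, ρ ≤ dist y x₀ → u y = 0)
    (hx : 2 * ρ ≤ dist x₀ x) :
    besovPointEnergy ν θ p u x ≤ ENNReal.ofReal Cν ^ 2 * ENNReal.ofReal (2 ^ (θ * p)) *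
      ν (ball x₀ ρ) / (ENNReal.ofReal (dist x₀ x ^ (θ * p)) * ν (ball x₀ (dist x₀ x))) := by
  classical
  set K := ENNReal.ofReal Cν ^ 2 * ENNReal.ofReal (2 ^ (θ * p))
  set M := ENNReal.ofReal (dist x₀ x ^ (θ * p)) * ν (ball x₀ (dist x₀ x))
  have ht : 0 < dist x₀ x := by linarith
  have hux : u x = 0 := hu0 x (by rw [dist_comm]; linarith)
  set g : Y → ℝ≥0∞ := fun y => if x = y then 0 else ENNReal.ofReal (|u x - u y| ^ p) /
    (ENNReal.ofReal (dist x y ^ (θ * p)) * ν (ball x (dist x y)))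
  have hsupp : Function.support g ⊆ ball x₀ ρ := fun y hy => by
    by_contra hyρ
    have : ENNReal.ofReal (|u x - u y| ^ p) = 0 := by
      rw [hux, hu0 y (not_lt.mp hyρ), sub_zero, abs_zero, Real.zero_rpow hp.ne',
        ENNReal.ofReal_zero]
    exact hy (by simp only [g, this, ENNReal.zero_div, ite_self])
  have hg : ∀ y ∈ ball x₀ ρ, g y ≤ K / M := fun y hy => by
    have hxy : dist x₀ x / 2 ≤ dist x y := by
      linarith [dist_triangle x₀ y x, mem_ball'.mp hy, dist_comm x y]
    rw [show g y = _ from if_neg (dist_pos.mp ((half_pos ht).trans_le hxy))]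
    refine (ENNReal.div_le_div_right (ENNReal.ofReal_le_one.mpr ?_) _).trans
      (hD.one_div_rpow_mul_measure_ball_le hB (mul_pos hθ0 hp).le ht hxy)
    rw [hux, zero_sub, abs_neg]
    exact Real.rpow_le_one (abs_nonneg _) (hu y) hp.le
  calc besovPointEnergy ν θ p u x = ∫⁻ y in ball x₀ ρ, g y ∂ν :=
        (setLIntegral_eq_of_support_subset hsupp).symm
    _ ≤ ∫⁻ _ in ball x₀ ρ, K / M ∂ν := setLIntegral_mono' measurableSet_ball hg
    _ = K * ν (ball x₀ ρ) / M := by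
        rw [setLIntegral_const]
        exact ENNReal.mul_div_right_comm.symm

end PointEnergy

section Cutoff

variable {Y : Type*} [MetricSpace Y]

noncomputable def ballCutoff (x₀ : Y) (R : ℝ) (z : Y) : ℝ := max 0 (min 1 (3 - 4 * dist z x₀ / R))

variable {x₀ : Y} {R : ℝ}

theorem ballCutoff_nonneg (z : Y) : 0 ≤ ballCutoff x₀ R z := le_max_left _ _

theorem ballCutoff_le_one (z : Y) : ballCutoff x₀ R z ≤ 1 :=
  max_le zero_le_one (min_le_left _ _)

theorem ballCutoff_eq_one (hR : 0 < R) {z : Y} (hz : dist z x₀ ≤ R / 2) :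
    ballCutoff x₀ R z = 1 := by
  have : 4 * dist z x₀ / R ≤ 2 := by
    rw [div_le_iff₀ hR]
    linarith
  replace : 1 ≤ 3 - 4 * dist z x₀ / R := by linarith
  rw [ballCutoff, min_eq_left this, max_eq_right zero_le_one]

theorem ballCutoff_eq_zero (hR : 0 < R) {z : Y} (hz : 3 * R / 4 ≤ dist z x₀) :
    ballCutoff x₀ R z = 0 := by
  have : 3 - 4 * dist z x₀ / R ≤ 0 := by
    rw [sub_nonpos, le_div_iff₀ hR]
    linarith
  exact max_eq_left ((min_le_right _ _).trans this)

theorem abs_ballCutoff_sub_le_one (x y : Y) : |ballCutoff x₀ R x - ballCutoff x₀ R y| ≤ 1 :=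
  abs_sub_le_of_nonneg_of_le (ballCutoff_nonneg x) (ballCutoff_le_one x) (ballCutoff_nonneg y)
    (ballCutoff_le_one y)

theorem abs_ballCutoff_sub_le (hR : 0 < R) (x y : Y) :
    |ballCutoff x₀ R x - ballCutoff x₀ R y| ≤ dist x y / (R / 4) := by
  calc |ballCutoff x₀ R x - ballCutoff x₀ R y|
      ≤ |min 1 (3 - 4 * dist x x₀ / R) - min 1 (3 - 4 * dist y x₀ / R)| := by
        simpa only [ballCutoff, max_comm (0:ℝ)] using abs_max_sub_max_le_abs _ _ _
    _ ≤ |(3 - 4 * dist x x₀ / R) - (3 - 4 * dist y x₀ / R)| := by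
        simpa using abs_min_sub_min_le_max 1 (3 - 4 * dist x x₀ / R) 1 (3 - 4 * dist y x₀ / R)
    _ = |dist y x₀ - dist x x₀| / (R / 4) := by
        rw [← abs_of_pos (show 0 < R / 4 by positivity), ← abs_div]
        congr 1
        field_simp
        ring
    _ ≤ dist x y / (R / 4) := by
        gcongr
        rw [dist_comm x y]
        exact abs_dist_sub_le y x x₀

theorem tsupport_ballCutoff_subset (hR : 0 < R) :
    tsupport (ballCutoff x₀ R) ⊆ closedBall x₀ (3 * R / 4) :=
  closure_minimal (fun _ hz => mem_closedBall.mpr (not_lt.mp fun h =>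
    hz (ballCutoff_eq_zero hR h.le))) isClosed_closedBall

end Cutoff

section CutoffEnergy

variable {Y : Type*} [MetricSpace Y] [MeasurableSpace Y] {ν : Measure Y} {Cν : ℝ} {x₀ : Y}
  {R : ℝ}

theorem IsDoublingWith.condAdmissible_ballCutoff [OpensMeasurableSpace Y] [CompleteSpace Y]
    (hD : IsDoublingWith ν Cν) (hB : BallsPosFinite ν) {r : ℝ} (hR : 0 < R) (h2r : 2 * r ≤ R) :
    condAdmissible (ball x₀ r) (ball x₀ R) (ballCutoff x₀ R) :=
  ⟨fun z => ⟨ballCutoff_nonneg z, ballCutoff_le_one z⟩,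
    ⟨ball x₀ (R / 2), isOpen_ball, ball_subset_ball (by linarith),
      fun _ hz => ballCutoff_eq_one hR (mem_ball.mp hz).le⟩,
    (hD.isCompact_closedBall hB x₀ _).of_isClosed_subset (isClosed_tsupport _)
      (tsupport_ballCutoff_subset hR),
    (tsupport_ballCutoff_subset hR).trans (closedBall_subset_ball (by linarith))⟩

theorem IsDoublingWith.besovPointEnergy_ballCutoff_le [OpensMeasurableSpace Y]
    (hD : IsDoublingWith ν Cν) (hB : BallsPosFinite ν) {θ p : ℝ} (hθ0 : 0 < θ) (hθ1 : θ < 1)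
    (hp : 0 < p) (hR : 0 < R) (x : Y) :
    besovPointEnergy ν θ p (ballCutoff x₀ R) x ≤ ENNReal.ofReal Cν ^ 2 *
      ENNReal.ofReal (4 ^ (θ * p) * besovTailConst (θ * p) p) *
      ENNReal.ofReal ((R ^ (θ * p))⁻¹) := by
  refine (hD.besovPointEnergy_le hB hθ0 hθ1 hp (by positivity) (abs_ballCutoff_sub_le_one x)
    (abs_ballCutoff_sub_le hR x)).trans_eq ?_
  rw [mul_assoc, ← ENNReal.ofReal_mul' (by positivity), Real.div_rpow hR.le (by norm_num)]
  field_simp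

theorem IsDoublingWith.setLIntegral_besovPointEnergy_ballCutoff_le [OpensMeasurableSpace Y]
    (hD : IsDoublingWith ν Cν) (hB : BallsPosFinite ν) {θ p : ℝ} (hθ0 : 0 < θ) (hp : 0 < p)
    (hR : 0 < R) :
    ∫⁻ x in {x | 2 * R < dist x₀ x}, besovPointEnergy ν θ p (ballCutoff x₀ R) x ∂ν ≤
      ENNReal.ofReal Cν ^ 4 * ENNReal.ofReal ((1 - 2 ^ (-(θ * p)))⁻¹) * ν (ball x₀ R) *
        ENNReal.ofReal ((R ^ (θ * p))⁻¹) := by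
  set s := θ * p
  set D := ENNReal.ofReal Cν
  have hs : 0 < s := mul_pos hθ0 hp
  have hcutoff : ∀ y, |ballCutoff x₀ R y| ≤ 1 := fun y =>
    (abs_of_nonneg (ballCutoff_nonneg y)).trans_le (ballCutoff_le_one y)
  have h2 : ENNReal.ofReal (2 ^ s) * ENNReal.ofReal (((2 * R) ^ s)⁻¹ * (1 - 2 ^ (-s))⁻¹) =
      ENNReal.ofReal ((1 - 2 ^ (-s))⁻¹) * ENNReal.ofReal ((R ^ s)⁻¹) := by
    rw [← ENNReal.ofReal_mul (by positivity),
      ← ENNReal.ofReal_mul (Real.inv_one_sub_two_rpow_nonneg (by linarith)),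
      Real.mul_rpow (by norm_num) hR.le]
    field_simp
  calc ∫⁻ x in {x | 2 * R < dist x₀ x}, besovPointEnergy ν θ p (ballCutoff x₀ R) x ∂ν
      ≤ D ^ 2 * (D ^ 2 * ENNReal.ofReal (2 ^ s) * ν (ball x₀ R)) *
          ENNReal.ofReal (((2 * R) ^ s)⁻¹ * (1 - 2 ^ (-s))⁻¹) :=
        hD.setLIntegral_far_le hB hs x₀ (by positivity) fun x hx =>
          hD.besovPointEnergy_le_of_far hB hθ0 hp hcutoff hR
            (fun _ hy => ballCutoff_eq_zero hR (by linarith)) hx.le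
    _ = D ^ 4 * ν (ball x₀ R) *
          (ENNReal.ofReal (2 ^ s) * ENNReal.ofReal (((2 * R) ^ s)⁻¹ * (1 - 2 ^ (-s))⁻¹)) := by
        ring
    _ = D ^ 4 * ENNReal.ofReal ((1 - 2 ^ (-s))⁻¹) * ν (ball x₀ R) *
          ENNReal.ofReal ((R ^ s)⁻¹) := by
        rw [h2]
        ring

theorem IsDoublingWith.besovEnergy_ballCutoff_le [OpensMeasurableSpace Y]
    (hD : IsDoublingWith ν Cν) (hB : BallsPosFinite ν) {θ p : ℝ} (hθ0 : 0 < θ) (hθ1 : θ < 1)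
    (hp : 0 < p) (hR : 0 < R) :
    besovEnergy ν θ p (ballCutoff x₀ R) ≤ ENNReal.ofReal Cν ^ 4 *
      ENNReal.ofReal (4 ^ (θ * p) * besovTailConst (θ * p) p + (1 - 2 ^ (-(θ * p)))⁻¹) *
      (ν (ball x₀ R) / ENNReal.ofReal (R ^ (θ * p))) := by
  set s := θ * p
  set D := ENNReal.ofReal Cν
  set PE := besovPointEnergy ν θ p (ballCutoff x₀ R)
  have hs : 0 < s := mul_pos hθ0 hp
  have hcover : closedBall x₀ (2 * R) ∪ {x | 2 * R < dist x₀ x} = univ :=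
    eq_univ_of_forall fun x => (le_or_gt (dist x x₀) (2 * R)).imp mem_closedBall.mpr
      fun h => by rwa [dist_comm] at h
  have hinner : ∫⁻ x in closedBall x₀ (2 * R), PE x ∂ν ≤ D ^ 2 *
      ENNReal.ofReal (4 ^ s * besovTailConst s p) * ENNReal.ofReal ((R ^ s)⁻¹) *
      (D ^ 2 * ν (ball x₀ R)) := by
    refine (setLIntegral_mono' measurableSet_closedBall fun x _ =>
      hD.besovPointEnergy_ballCutoff_le hB hθ0 hθ1 hp hR x).trans ?_
    rw [setLIntegral_const]
    gcongr
    exact hD.measure_le_of_subset_ball hR (closedBall_subset_ball (by linarith))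
  calc besovEnergy ν θ p (ballCutoff x₀ R)
      = ∫⁻ x in closedBall x₀ (2 * R) ∪ {x | 2 * R < dist x₀ x}, PE x ∂ν := by
        rw [hcover, setLIntegral_univ]; rfl
    _ ≤ _ := lintegral_union_le _ _ _
    _ ≤ _ := add_le_add hinner (hD.setLIntegral_besovPointEnergy_ballCutoff_le hB hθ0 hp hR)
    _ = D ^ 4 * ENNReal.ofReal (4 ^ s * besovTailConst s p + (1 - 2 ^ (-s))⁻¹) *
          (ν (ball x₀ R) / ENNReal.ofReal (R ^ s)) := by
        rw [ENNReal.ofReal_add (mul_nonneg (by positivity)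
          (besovTailConst_nonneg hs.le (mul_lt_of_lt_one_left hp hθ1)))
          (Real.inv_one_sub_two_rpow_nonneg (by linarith)), div_eq_mul_inv,
          ← ENNReal.ofReal_inv_of_pos (by positivity)]
        ring

end CutoffEnergy

theorem UnifPerfectAt.exists_two_mul_le_dist_lt {Y : Type*} [MetricSpace Y] {x₀ : Y} {κ : ℝ}
    (hUP : UnifPerfectAt x₀ κ) {R : ℝ} (hR : 0 < R) (hne : ball x₀ (2 * R) ≠ univ) :
    ∃ z, 2 * R ≤ dist z x₀ ∧ dist z x₀ < κ * (2 * R) := by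
  by_cases hall : ball x₀ (κ * (2 * R)) = univ
  · obtain ⟨z, hz⟩ := (ne_univ_iff_exists_notMem _).mp hne
    exact ⟨z, not_lt.mp hz, mem_ball.mp (hall ▸ mem_univ z)⟩
  · obtain ⟨z, hz, hz'⟩ := hUP (2 * R) (by positivity) hall
    exact ⟨z, not_lt.mp hz', mem_ball.mp hz⟩

section LowerBound

variable {Y : Type*} [MetricSpace Y] [MeasurableSpace Y] {ν : Measure Y} {Cν : ℝ}

theorem measure_div_le_besovPointEnergy {θ p : ℝ} (hθ : 0 ≤ θ) (hp : 0 < p) {u : Y → ℝ}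
    {x : Y} {S : Set Y} (hS : MeasurableSet S) {L : ℝ} (hjump : ∀ y ∈ S, 1 ≤ |u x - u y|)
    (hdist : ∀ y ∈ S, dist x y ≤ L) :
    ν S / (ENNReal.ofReal (L ^ (θ * p)) * ν (ball x L)) ≤ besovPointEnergy ν θ p u x := by
  calc ν S / (ENNReal.ofReal (L ^ (θ * p)) * ν (ball x L))
      = ∫⁻ _ in S, (ENNReal.ofReal (L ^ (θ * p)) * ν (ball x L))⁻¹ ∂ν := by
        rw [setLIntegral_const, div_eq_mul_inv, mul_comm]
    _ ≤ _ := setLIntegral_mono' hS fun y hy => by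
        have hxy : x ≠ y := fun h => by
          have := hjump y hy
          rw [h, sub_self, abs_zero] at this
          linarith
        rw [if_neg hxy, ← one_div]
        exact ENNReal.div_le_div
          (ENNReal.one_le_ofReal.mpr (Real.one_le_rpow (hjump y hy) hp.le))
          (mul_le_mul' (ENNReal.ofReal_le_ofReal (Real.rpow_le_rpow dist_nonneg (hdist y hy)
            (mul_nonneg hθ hp.le))) (measure_mono (ball_subset_ball (hdist y hy))))
    _ ≤ besovPointEnergy ν θ p u x := setLIntegral_le_lintegral _ _

variable [OpensMeasurableSpace Y]

/-- An admissible `u` jumps from `1` on `ball x₀ r` to `0` on `ball z R`, and every pair of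
points from these two balls is within `4κR`. -/
theorem IsDoublingWith.measure_ball_mul_measure_ball_le_besovEnergy (hD : IsDoublingWith ν Cν)
    (hB : BallsPosFinite ν) {θ p κ : ℝ} (hθ : 0 ≤ θ) (hp : 0 < p) (hκ : 1 ≤ κ) {x₀ z : Y}
    {r R : ℝ} (hr : 0 < r) (hrR : r ≤ R) (hz₁ : 2 * R ≤ dist z x₀) (hz₂ : dist z x₀ < κ * (2 * R))
    {n : ℕ} (hn : 5 * κ ≤ 2 ^ n) {u : Y → ℝ} (hu : condAdmissible (ball x₀ r) (ball x₀ R) u) :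
    ν (ball x₀ r) * ν (ball z R) ≤ ENNReal.ofReal ((4 * κ * R) ^ (θ * p)) *
      (ENNReal.ofReal Cν ^ n * ν (ball x₀ R)) * besovEnergy ν θ p u := by
  have hR : 0 < R := hr.trans_le hrR
  obtain ⟨-, ⟨G, -, hGsub, hG1⟩, -, hsupp⟩ := hu
  have hu0 : ∀ y ∈ ball z R, u y = 0 := fun y hy =>
    image_eq_zero_of_notMem_tsupport fun h => by
      have := mem_ball.mp (hsupp h)
      linarith [dist_triangle z y x₀, mem_ball'.mp hy]
  set X := ENNReal.ofReal ((4 * κ * R) ^ (θ * p)) * (ENNReal.ofReal Cν ^ n * ν (ball x₀ R))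
  have hm := hB x₀ R hR
  have hX0 : X ≠ 0 := mul_ne_zero (ENNReal.ofReal_pos.mpr (by positivity)).ne'
    (mul_ne_zero (pow_ne_zero _ (hD.ofReal_ne_zero hB x₀)) hm.1.ne')
  have hXt : X ≠ ∞ := ENNReal.mul_ne_top ENNReal.ofReal_ne_top
    (ENNReal.mul_ne_top (ENNReal.pow_ne_top ENNReal.ofReal_ne_top) hm.2.ne)
  have hPE : ∀ x ∈ ball x₀ r, ν (ball z R) / X ≤ besovPointEnergy ν θ p u x := fun x hx => by
    have hxy : ∀ y ∈ ball z R, dist x y ≤ 4 * κ * R := fun y hy => by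
      nlinarith [dist_triangle4 x x₀ z y, mem_ball.mp hx, mem_ball'.mp hy, dist_comm x₀ z]
    refine (ENNReal.div_le_div_left (mul_le_mul' le_rfl ?_) _).trans
      (measure_div_le_besovPointEnergy hθ hp measurableSet_ball (fun y hy => by
        rw [hG1 x (hGsub hx), hu0 y hy, sub_zero, abs_one]) hxy)
    exact hD.measure_le_of_subset_ball hR fun w hw => by
      rw [mem_ball] at hw ⊢
      nlinarith [dist_triangle w x x₀, mem_ball.mp hx]
  have hE : ν (ball x₀ r) * (ν (ball z R) / X) ≤ besovEnergy ν θ p u :=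
    calc ν (ball x₀ r) * (ν (ball z R) / X) = ∫⁻ _ in ball x₀ r, ν (ball z R) / X ∂ν := by
          rw [setLIntegral_const, mul_comm]
      _ ≤ ∫⁻ x in ball x₀ r, besovPointEnergy ν θ p u x ∂ν :=
          setLIntegral_mono' measurableSet_ball hPE
      _ ≤ besovEnergy ν θ p u := setLIntegral_le_lintegral _ _
  calc ν (ball x₀ r) * ν (ball z R) = ν (ball x₀ r) * (ν (ball z R) / X) * X := by
        rw [mul_assoc, ENNReal.div_mul_cancel hX0 hXt]
    _ ≤ besovEnergy ν θ p u * X := by gcongr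
    _ = X * besovEnergy ν θ p u := mul_comm _ _

theorem IsDoublingWith.measure_ball_le_mul_besovEnergy (hD : IsDoublingWith ν Cν)
    (hB : BallsPosFinite ν) {θ p κ : ℝ} (hθ : 0 ≤ θ) (hp : 0 < p) (hκ : 1 ≤ κ) {x₀ : Y}
    (hUP : UnifPerfectAt x₀ κ) {r R : ℝ} (hr : 0 < r) (hrR : r ≤ R) {n : ℕ}
    (hn : 5 * κ ≤ 2 ^ n) (hRr : R ≤ 2 ^ n * r) (hne : ball x₀ (2 * R) ≠ univ) {u : Y → ℝ}
    (hu : condAdmissible (ball x₀ r) (ball x₀ R) u) :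
    ν (ball x₀ R) ≤ ENNReal.ofReal ((4 * κ) ^ (θ * p)) * ENNReal.ofReal Cν ^ (3 * n) *
      ENNReal.ofReal (R ^ (θ * p)) * besovEnergy ν θ p u := by
  have hR : 0 < R := hr.trans_le hrR
  have hm := hB x₀ R hR
  obtain ⟨z, hz₁, hz₂⟩ := hUP.exists_two_mul_le_dist_lt hR hne
  set D := ENNReal.ofReal Cν
  have hmr : ν (ball x₀ R) ≤ D ^ n * ν (ball x₀ r) :=
    hD.measure_le_of_subset_ball hr (ball_subset_ball hRr)
  have hmz : ν (ball x₀ R) ≤ D ^ n * ν (ball z R) := hD.measure_le_of_subset_ball hR fun w hw => by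
    rw [mem_ball] at hw ⊢
    nlinarith [dist_triangle w x₀ z, dist_comm x₀ z]
  rw [← ENNReal.mul_le_mul_iff_left hm.1.ne' hm.2.ne]
  calc ν (ball x₀ R) * ν (ball x₀ R) ≤ D ^ n * D ^ n * (ν (ball x₀ r) * ν (ball z R)) := by
        rw [mul_mul_mul_comm]
        exact mul_le_mul' hmr hmz
    _ ≤ D ^ n * D ^ n * (ENNReal.ofReal ((4 * κ * R) ^ (θ * p)) * (D ^ n * ν (ball x₀ R)) *
          besovEnergy ν θ p u) := by
        exact mul_le_mul' le_rfl
          (hD.measure_ball_mul_measure_ball_le_besovEnergy hB hθ hp hκ hr hrR hz₁ hz₂ hn hu)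
    _ = _ := by
        rw [Real.mul_rpow (by positivity) hR.le, ENNReal.ofReal_mul (by positivity)]
        ring

end LowerBound

section Capacity

variable {Y : Type*} [MetricSpace Y] [MeasurableSpace Y] {ν : Measure Y} {θ p : ℝ}
  {E Ω : Set Y}

theorem besovCondCap_le_besovEnergy {u : Y → ℝ} (hu : condAdmissible E Ω u) :
    besovCondCap ν θ p E Ω ≤ besovEnergy ν θ p u :=
  iInf₂_le u hu

theorem le_mul_besovCondCap {K X : ℝ≥0∞} (hK0 : K ≠ 0) (hK : K ≠ ∞)
    (h : ∀ u, condAdmissible E Ω u → X ≤ K * besovEnergy ν θ p u) :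
    X ≤ K * besovCondCap ν θ p E Ω := by
  rw [besovCondCap, ENNReal.mul_iInf_of_ne hK0 hK]
  refine le_iInf fun u => ?_
  rw [ENNReal.mul_iInf_of_ne hK0 hK]
  exact le_iInf (h u)

end Capacity

section BallComparison

variable {Y : Type*} [MetricSpace Y] [MeasurableSpace Y] {ν : Measure Y} {s r R : ℝ}

theorem IsDoublingWith.measure_ball_div_rpow_le {Cν : ℝ} (hD : IsDoublingWith ν Cν)
    (hs : 0 ≤ s) (x : Y) (hr : 0 < r) (hrR : r ≤ R) {n : ℕ} (hRr : R ≤ 2 ^ n * r) :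
    ν (ball x R) / ENNReal.ofReal (R ^ s) ≤
      ENNReal.ofReal Cν ^ n * (ν (ball x r) / ENNReal.ofReal (r ^ s)) :=
  (ENNReal.div_le_div (hD.measure_le_of_subset_ball hr (ball_subset_ball hRr))
    (ENNReal.ofReal_le_ofReal (Real.rpow_le_rpow hr.le hrR hs))).trans_eq (mul_div_assoc _ _ _)

theorem measure_ball_div_rpow_le_of_le_mul (hs : 0 ≤ s) (x : Y) (hr : 0 < r) (hrR : r ≤ R)
    {c : ℝ} (hRr : R ≤ c * r) :
    ν (ball x r) / ENNReal.ofReal (r ^ s) ≤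
      ENNReal.ofReal (c ^ s) * (ν (ball x R) / ENNReal.ofReal (R ^ s)) := by
  have hc : 0 < c := pos_of_mul_pos_left ((hr.trans_le hrR).trans_le hRr) hr.le
  have hc0 : ENNReal.ofReal (c ^ s) ≠ 0 := (ENNReal.ofReal_pos.mpr (by positivity)).ne'
  calc ν (ball x r) / ENNReal.ofReal (r ^ s)
      ≤ ENNReal.ofReal (c ^ s) * ν (ball x R) /
          (ENNReal.ofReal (c ^ s) * ENNReal.ofReal (r ^ s)) := by
        rw [ENNReal.mul_div_mul_left _ _ hc0 ENNReal.ofReal_ne_top]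
        gcongr
    _ ≤ ENNReal.ofReal (c ^ s) * ν (ball x R) / ENNReal.ofReal (R ^ s) := by
        rw [← ENNReal.ofReal_mul (by positivity), ← Real.mul_rpow hc.le hr.le]
        gcongr
        exact hr.le.trans hrR
    _ = ENNReal.ofReal (c ^ s) * (ν (ball x R) / ENNReal.ofReal (R ^ s)) := mul_div_assoc _ _ _

end BallComparison

theorem ENNReal.mutual_bounds_of_comparable {c M m A B E F K : ℝ≥0∞} (hup : c ≤ A * M)
    (hlow : M ≤ B * c) (hMm : M ≤ E * m) (hmM : m ≤ F * M) (hK : A * E + F * B + A + B ≤ K) :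
    (c ≤ K * m ∧ m ≤ K * c) ∧ (c ≤ K * M ∧ M ≤ K * c) := by
  refine ⟨⟨?_, ?_⟩, hup.trans ?_, hlow.trans ?_⟩
  · calc c ≤ A * (E * m) := hup.trans (by gcongr)
      _ = A * E * m := (mul_assoc _ _ _).symm
      _ ≤ K * m := by gcongr; exact le_self_add.trans (le_self_add.trans le_self_add) |>.trans hK
  · calc m ≤ F * (B * c) := hmM.trans (by gcongr)
      _ = F * B * c := (mul_assoc _ _ _).symm
      _ ≤ K * c := by gcongr; exact le_add_self.trans (le_self_add.trans le_self_add) |>.trans hK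
  · gcongr
    exact le_add_self.trans le_self_add |>.trans hK
  · gcongr
    exact le_add_self.trans hK

theorem stmt18_general (θ p κ Cν Θ : ℝ) (hθ0 : 0 < θ) (hθ1 : θ < 1) (hp : 1 ≤ p)
    (hκ : 1 < κ) (hΘ0 : 0 < Θ) :
    ∃ C : ℝ, 0 < C ∧
      ∀ (Y : Type u) [MetricSpace Y] [MeasurableSpace Y] [BorelSpace Y] [CompleteSpace Y]
        (ν : Measure Y), IsDoublingWith ν Cν → BallsPosFinite ν →
        ∀ x₀ : Y, UnifPerfectAt x₀ κ →
        ∀ r R : ℝ, 0 < Θ * R → Θ * R ≤ 2 * r → 2 * r ≤ R → ball x₀ (2 * R) ≠ univ →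
          (besovCondCap ν θ p (ball x₀ r) (ball x₀ R) ≤
              ENNReal.ofReal C * (ν (ball x₀ r) / ENNReal.ofReal (r ^ (θ * p))) ∧
            ν (ball x₀ r) / ENNReal.ofReal (r ^ (θ * p)) ≤
              ENNReal.ofReal C * besovCondCap ν θ p (ball x₀ r) (ball x₀ R)) ∧
          (besovCondCap ν θ p (ball x₀ r) (ball x₀ R) ≤
              ENNReal.ofReal C * (ν (ball x₀ R) / ENNReal.ofReal (R ^ (θ * p))) ∧
            ν (ball x₀ R) / ENNReal.ofReal (R ^ (θ * p)) ≤
              ENNReal.ofReal C * besovCondCap ν θ p (ball x₀ r) (ball x₀ R)) := by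
  have hp0 : 0 < p := by linarith
  have hs : 0 ≤ θ * p := by positivity
  obtain ⟨n, hn⟩ := pow_unbounded_of_one_lt (max (5 * κ) (2 / Θ)) one_lt_two
  set Kup := ENNReal.ofReal Cν ^ 4 *
    ENNReal.ofReal (4 ^ (θ * p) * besovTailConst (θ * p) p + (1 - 2 ^ (-(θ * p)))⁻¹)
  set Klow := ENNReal.ofReal ((4 * κ) ^ (θ * p)) * ENNReal.ofReal Cν ^ (3 * n)
  set K := Kup * ENNReal.ofReal Cν ^ n + ENNReal.ofReal (((2:ℝ) ^ n) ^ (θ * p)) * Klow + Kup + Klow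
  have hK : K ≤ ENNReal.ofReal (K.toReal + 1) :=
    (ENNReal.ofReal_toReal (by finiteness)).symm.le.trans (ENNReal.ofReal_le_ofReal (by linarith))
  refine ⟨K.toReal + 1, by positivity, fun Y _ _ _ _ ν hD hB x₀ hUP r R hΘR hΘr h2r hne => ?_⟩
  have hR : 0 < R := pos_of_mul_pos_right hΘR hΘ0.le
  have hr : 0 < r := by linarith
  have hRr : R ≤ 2 ^ n * r := by
    have h2 : 2 < Θ * 2 ^ n := by
      rw [← div_lt_iff₀' hΘ0]
      exact (le_max_right _ _).trans_lt hn
    exact (lt_of_mul_lt_mul_left (by nlinarith) hΘ0.le).le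
  refine ENNReal.mutual_bounds_of_comparable ?_ ?_
    (hD.measure_ball_div_rpow_le hs x₀ hr (by linarith) hRr)
    (measure_ball_div_rpow_le_of_le_mul hs x₀ hr (by linarith) hRr) hK
  · exact (besovCondCap_le_besovEnergy (hD.condAdmissible_ballCutoff hB hR h2r)).trans
      (hD.besovEnergy_ballCutoff_le hB hθ0 hθ1 hp0 hR)
  · refine le_mul_besovCondCap (mul_ne_zero (ENNReal.ofReal_pos.mpr (by positivity)).ne'
      (pow_ne_zero _ (hD.ofReal_ne_zero hB x₀))) (by finiteness)
      fun u hu => ENNReal.div_le_of_le_mul ?_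
    exact (hD.measure_ball_le_mul_besovEnergy hB hθ0.le hp0 hκ.le hUP hr (by linarith)
      ((le_max_left _ _).trans hn.le) hRr hne hu).trans_eq (by ring)

theorem stmt18 (θ p κ Cν Θ : ℝ) (hθ0 : 0 < θ) (hθ1 : θ < 1) (hp : 1 ≤ p)
    (hκ : 1 < κ) (hC : 1 < Cν) (hΘ0 : 0 < Θ) (hΘ1 : Θ < 1) :
    ∃ C : ℝ, 0 < C ∧
      ∀ (Y : Type u) [MetricSpace Y] [MeasurableSpace Y] [BorelSpace Y] [CompleteSpace Y]
        (ν : Measure Y), IsDoublingWith ν Cν → BallsPosFinite ν →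
        ∀ x₀ : Y, UnifPerfectAt x₀ κ →
        ∀ r R : ℝ, 0 < Θ * R → Θ * R ≤ 2 * r → 2 * r ≤ R → ball x₀ (2 * R) ≠ univ →
          (besovCondCap ν θ p (ball x₀ r) (ball x₀ R) ≤
              ENNReal.ofReal C * (ν (ball x₀ r) / ENNReal.ofReal (r ^ (θ * p))) ∧
            ν (ball x₀ r) / ENNReal.ofReal (r ^ (θ * p)) ≤
              ENNReal.ofReal C * besovCondCap ν θ p (ball x₀ r) (ball x₀ R)) ∧
          (besovCondCap ν θ p (ball x₀ r) (ball x₀ R) ≤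
              ENNReal.ofReal C * (ν (ball x₀ R) / ENNReal.ofReal (R ^ (θ * p))) ∧
            ν (ball x₀ R) / ENNReal.ofReal (R ^ (θ * p)) ≤
              ENNReal.ofReal C * besovCondCap ν θ p (ball x₀ r) (ball x₀ R)) :=
  stmt18_general θ p κ Cν Θ hθ0 hθ1 hp hκ hΘ0
end
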